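/- arXiv:math/0609355 — 2 statements merged into one kernel-verified Lean document; each statement's English description precedes it below -/
import Mathlib

section
/- In the del Pezzo lattice of rank 9 (δ = 8): if (Q₁, Q₂) and (Q₁′, Q₂′) are ordered pairs of conic classes with Q₁·Q₂ = Q₁′·Q₂′ and Q₁·Q₂ ≠ 4, then there exists an element g of the Weyl group W₈ with g(Q₁) = Q₁′ and g(Q₂) = Q₂′. -/
/-- A class in the del Pezzo lattice of rank `1 + δ`: the pair `(a, b)`
represents `a·ℓ − b₁e₁ − ⋯ − b_δ e_δ`. -/
abbrev Cls (δ : ℕ) : Type := ℤ × (Fin δ → ℤ)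

/-- The intersection product: `(a;b)·(a';b') = a a' − Σ bᵢ bᵢ'`. -/
def ip {δ : ℕ} (x y : Cls δ) : ℤ := x.1 * y.1 - ∑ i, x.2 i * y.2 i

/-- The canonical class `K = −3ℓ + e₁ + ⋯ + e_δ`, i.e. `(−3; −1, …, −1)`. -/
def Kcls (δ : ℕ) : Cls δ := (-3, fun _ => -1)

/-- A conic class: `Q·Q = 0` and `K·Q = −2`. -/
def IsConic {δ : ℕ} (Q : Cls δ) : Prop := ip Q Q = 0 ∧ ip (Kcls δ) Q = -2

/-- A `(−1)`-class: `L·L = −1` and `K·L = −1`. -/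
def IsMinusOne {δ : ℕ} (L : Cls δ) : Prop := ip L L = -1 ∧ ip (Kcls δ) L = -1

/-- Membership in the Weyl group `W_δ`: a ℤ-linear automorphism of the lattice
preserving the intersection form and fixing the canonical class. -/
def IsWeyl {δ : ℕ} (g : Cls δ ≃ₗ[ℤ] Cls δ) : Prop :=
  (∀ x y : Cls δ, ip (g x) (g y) = ip x y) ∧ g (Kcls δ) = Kcls δ

/-!
The form is hyperbolic and `K·K = 1`, so it is negative definite on `K^⊥`. Applied to `Q − Q'`,
`Q + Q' + 4K` and `Q − 2E` this gives `0 ≤ Q·Q' ≤ 8` for conics and `Q·E ≥ 0` for `(−1)`-classes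
`E`, so a conic `(a; b)` has `0 ≤ bᵢ ≤ a`.

Reflections in the roots `ℓ − e_i − e_j − e_k` lower the degree `a` of a conic while some
`b_i + b_j + b_k > a`, which by Noether's inequality holds as long as `a ≥ 2`; hence every conic
is Weyl-equivalent to `ℓ − e₀`. With `Q₁ = ℓ − e₀` fixed, reflections in the roots
`ℓ − e₀ − e_i − e_j` reduce `Q₂` until `b_i + b_j ≤ n = Q₁·Q₂` for all `i, j ≥ 1`. For `n ≤ 3`
this leaves all of `b₁, …, b₇` but the largest in `{0, 1}`, and then `a` and the sorted
`b₁, …, b₇` are determined by `n`: two reduced pairs differ by a permutation of `e₁, …, e₇`.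
Finally `Q ↦ −4K − Q` commutes with `W₈`, preserves conics and turns `n` into `8 − n`, which
covers `5 ≤ n ≤ 8`; for `n = 4` there are two reduced profiles.
-/

variable {δ : ℕ}

lemma ip_comm (x y : Cls δ) : ip x y = ip y x := by
  simp [ip, mul_comm]

@[simp]
lemma ip_add_left (x y z : Cls δ) : ip (x + y) z = ip x z + ip y z := by
  simp only [ip, Prod.fst_add, Prod.snd_add, Pi.add_apply, add_mul, Finset.sum_add_distrib]
  ring

@[simp]
lemma ip_smul_left (c : ℤ) (x y : Cls δ) : ip (c • x) y = c * ip x y := by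
  simp only [ip, Prod.smul_fst, Prod.smul_snd, Pi.smul_apply, smul_eq_mul, mul_assoc,
    ← Finset.mul_sum, mul_sub]

@[simp]
lemma ip_add_right (x y z : Cls δ) : ip x (y + z) = ip x y + ip x z := by
  rw [ip_comm, ip_add_left, ip_comm y, ip_comm z]

@[simp]
lemma ip_smul_right (c : ℤ) (x y : Cls δ) : ip x (c • y) = c * ip x y := by
  rw [ip_comm, ip_smul_left, ip_comm]

def ipForm : LinearMap.BilinForm ℤ (Cls δ) :=
  LinearMap.mk₂ ℤ ip ip_add_left ip_smul_left ip_add_right ip_smul_right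

@[simp]
lemma ipForm_apply (x y : Cls δ) : ipForm x y = ip x y := rfl

@[simp]
lemma ip_sub_left (x y z : Cls δ) : ip (x - y) z = ip x z - ip y z :=
  LinearMap.map_sub₂ ipForm x y z

@[simp]
lemma ip_sub_right (x y z : Cls δ) : ip x (y - z) = ip x y - ip x z :=
  map_sub (ipForm x) y z

lemma ip_Kcls (x : Cls δ) : ip (Kcls δ) x = -3 * x.1 + ∑ i, x.2 i := by
  simp [ip, Kcls]

lemma ip_Kcls_Kcls : ip (Kcls δ) (Kcls δ) = 9 - δ := by
  simp [ip, Kcls]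

lemma IsConic.ip_Kcls_right {Q : Cls δ} (hQ : IsConic Q) : ip Q (Kcls δ) = -2 := by
  rw [ip_comm]; exact hQ.2

def rootReflection (r : Cls δ) (hr : ip r r = -2) : Cls δ ≃ₗ[ℤ] Cls δ :=
  Module.reflection (x := r) (f := -ipForm r) (by simp [hr])

lemma rootReflection_apply (r : Cls δ) (hr : ip r r = -2) (x : Cls δ) :
    rootReflection r hr x = x + ip r x • r := by
  simp [rootReflection, Module.reflection_apply]

lemma rootReflection_apply_of_ip_eq_zero {r : Cls δ} (hr : ip r r = -2) {x : Cls δ}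
    (hx : ip r x = 0) : rootReflection r hr x = x := by
  simp [rootReflection_apply, hx]

lemma isWeyl_rootReflection {r : Cls δ} (hr : ip r r = -2) (hK : ip (Kcls δ) r = 0) :
    IsWeyl (rootReflection r hr) := by
  refine ⟨fun x y => ?_, rootReflection_apply_of_ip_eq_zero hr (by rw [ip_comm, hK])⟩
  simp only [rootReflection_apply, ip_add_left, ip_add_right, ip_smul_left, ip_smul_right, hr]
  rw [ip_comm x r]
  ring

lemma IsWeyl.trans {g h : Cls δ ≃ₗ[ℤ] Cls δ} (hg : IsWeyl g) (hh : IsWeyl h) :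
    IsWeyl (g.trans h) :=
  ⟨fun x y => by simp only [LinearEquiv.trans_apply, hh.1, hg.1], by simp [hg.2, hh.2]⟩

lemma IsWeyl.symm {g : Cls δ ≃ₗ[ℤ] Cls δ} (hg : IsWeyl g) : IsWeyl g.symm := by
  refine ⟨fun x y => ?_, by rw [LinearEquiv.symm_apply_eq, hg.2]⟩
  rw [← hg.1, LinearEquiv.apply_symm_apply, LinearEquiv.apply_symm_apply]

lemma IsConic.map {g : Cls δ ≃ₗ[ℤ] Cls δ} (hg : IsWeyl g) {Q : Cls δ} (hQ : IsConic Q) :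
    IsConic (g Q) :=
  ⟨by rw [hg.1, hQ.1], by rw [← hg.2, hg.1, hQ.2]⟩

def permEquiv (π : Equiv.Perm (Fin δ)) : Cls δ ≃ₗ[ℤ] Cls δ :=
  (LinearEquiv.refl ℤ ℤ).prodCongr (LinearEquiv.funCongrLeft ℤ ℤ π)

@[simp]
lemma permEquiv_apply (π : Equiv.Perm (Fin δ)) (x : Cls δ) :
    permEquiv π x = (x.1, x.2 ∘ π) := rfl

lemma isWeyl_permEquiv (π : Equiv.Perm (Fin δ)) : IsWeyl (permEquiv π) := by
  refine ⟨fun x y => ?_, rfl⟩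
  simp only [permEquiv_apply, ip, Function.comp_apply]
  rw [Equiv.sum_comp π (fun i => x.2 i * y.2 i)]

lemma sq_sum_snd_le (x : Cls δ) : (∑ i, x.2 i) ^ 2 ≤ δ * ∑ i, x.2 i * x.2 i := by
  simpa [sq] using sq_sum_le_card_mul_sum_sq (s := Finset.univ) (f := x.2)

/-- Hodge index: as `K·K = 9 − δ ≥ 0`, the form is negative semidefinite on `K^⊥`. -/
lemma ip_self_nonpos_of_ip_Kcls_eq_zero (hδ : δ ≤ 9) {z : Cls δ}
    (hz : ip (Kcls δ) z = 0) : ip z z ≤ 0 := by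
  have hsum : ∑ i, z.2 i = 3 * z.1 := by rw [ip_Kcls] at hz; linarith
  have hcs := sq_sum_snd_le z
  have hsq : 0 ≤ ∑ i, z.2 i * z.2 i := Finset.sum_nonneg fun i _ => mul_self_nonneg _
  have hδ' : (δ : ℤ) ≤ 9 := by exact_mod_cast hδ
  rw [hsum] at hcs
  simp only [ip]
  nlinarith

lemma eq_zero_of_ip_Kcls_eq_zero (hδ : δ ≤ 8) {z : Cls δ}
    (hz : ip (Kcls δ) z = 0) (hzz : ip z z = 0) : z = 0 := by
  have hsum : ∑ i, z.2 i = 3 * z.1 := by rw [ip_Kcls] at hz; linarith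
  have hcs := sq_sum_snd_le z
  have hsq : ∑ i, z.2 i * z.2 i = z.1 * z.1 := by simp only [ip] at hzz; linarith
  have hδ' : (δ : ℤ) ≤ 8 := by exact_mod_cast hδ
  rw [hsum, hsq] at hcs
  have h1 : z.1 = 0 := by nlinarith [mul_self_nonneg z.1]
  rw [h1, mul_zero, Finset.sum_mul_self_eq_zero_iff] at hsq
  exact Prod.ext h1 (funext fun i => hsq i (Finset.mem_univ i))

lemma IsConic.ip_nonneg (hδ : δ ≤ 9) {Q Q' : Cls δ} (hQ : IsConic Q) (hQ' : IsConic Q') :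
    0 ≤ ip Q Q' := by
  have := ip_self_nonpos_of_ip_Kcls_eq_zero hδ (z := Q - Q') (by simp [hQ.2, hQ'.2])
  simp only [ip_sub_left, ip_sub_right, hQ.1, hQ'.1, ip_comm Q' Q] at this
  linarith

lemma IsConic.eq_of_ip_eq_zero (hδ : δ ≤ 8) {Q Q' : Cls δ} (hQ : IsConic Q) (hQ' : IsConic Q')
    (h : ip Q Q' = 0) : Q = Q' :=
  sub_eq_zero.mp <| eq_zero_of_ip_Kcls_eq_zero hδ (by simp [hQ.2, hQ'.2])
    (by simp [hQ.1, hQ'.1, ip_comm Q' Q, h])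

lemma IsConic.ip_le_eight {Q Q' : Cls 8} (hQ : IsConic Q) (hQ' : IsConic Q') :
    ip Q Q' ≤ 8 := by
  have := ip_self_nonpos_of_ip_Kcls_eq_zero (by norm_num) (z := Q + Q' + (4 : ℤ) • Kcls 8)
    (by simp only [ip_add_right, ip_smul_right, hQ.2, hQ'.2, ip_Kcls_Kcls]; norm_num)
  simp only [ip_add_left, ip_add_right, ip_smul_left, ip_smul_right, hQ.1, hQ'.1, hQ.2, hQ'.2,
    hQ.ip_Kcls_right, hQ'.ip_Kcls_right, ip_Kcls_Kcls, ip_comm Q' Q] at this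
  norm_num at this
  linarith

lemma IsConic.ip_nonneg_of_isMinusOne (hδ : δ ≤ 8) {Q E : Cls δ} (hQ : IsConic Q)
    (hE : IsMinusOne E) : 0 ≤ ip Q E := by
  have hz : ip (Kcls δ) (Q - (2 : ℤ) • E) = 0 := by
    rw [ip_sub_right, ip_smul_right, hQ.2, hE.2]; norm_num
  have hzz : ip (Q - (2 : ℤ) • E) (Q - (2 : ℤ) • E) = -4 * ip Q E - 4 := by
    simp only [ip_sub_left, ip_sub_right, ip_smul_left, ip_smul_right, hQ.1, hE.1, ip_comm E Q]
    ring
  have hle := ip_self_nonpos_of_ip_Kcls_eq_zero (by omega) hz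
  by_contra! hneg
  have hQE : (2 : ℤ) • E = Q := (sub_eq_zero.mp (eq_zero_of_ip_Kcls_eq_zero hδ hz
    (by rw [hzz]; omega))).symm
  have := hQ.1
  rw [← hQE, ip_smul_left, ip_smul_right, hE.1] at this
  norm_num at this

/-- The exceptional class `e_i`, i.e. `(0; 0, …, −1, …, 0)`. -/
def exceptional (i : Fin δ) : Cls δ := (0, -Pi.single i 1)

lemma ip_exceptional (x : Cls δ) (i : Fin δ) : ip x (exceptional i) = x.2 i := by
  simp [ip, exceptional, Pi.single_apply]

lemma isMinusOne_exceptional (i : Fin δ) : IsMinusOne (exceptional i) := by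
  constructor <;> simp [ip, exceptional, Kcls, Pi.single_apply]

/-- The class `ℓ − ∑_{i ∈ S} e_i`, i.e. `(1; 𝟙_S)`. -/
def lineMinus (S : Finset (Fin δ)) : Cls δ := (1, fun i => if i ∈ S then 1 else 0)

lemma ip_lineMinus (x : Cls δ) (S : Finset (Fin δ)) :
    ip x (lineMinus S) = x.1 - ∑ i ∈ S, x.2 i := by
  simp [ip, lineMinus, mul_ite, Finset.sum_ite_mem]

lemma ip_lineMinus_self (S : Finset (Fin δ)) : ip (lineMinus S) (lineMinus S) = 1 - S.card := by
  rw [ip_lineMinus]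
  simp [lineMinus, Finset.sum_ite_mem]

lemma ip_Kcls_lineMinus (S : Finset (Fin δ)) : ip (Kcls δ) (lineMinus S) = S.card - 3 := by
  rw [ip_lineMinus]
  simp [Kcls]
  ring

/-- The conic class `ℓ − e_i` of the pencil of lines through the `i`-th point. -/
abbrev pencil (i : Fin δ) : Cls δ := lineMinus {i}

lemma isConic_pencil (i : Fin δ) : IsConic (pencil i) :=
  ⟨by simp [ip_lineMinus_self], by rw [ip_Kcls_lineMinus]; simp⟩

lemma ip_pencil (i : Fin δ) (x : Cls δ) : ip (pencil i) x = x.1 - x.2 i := by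
  rw [ip_comm, ip_lineMinus, Finset.sum_singleton]

lemma permEquiv_pencil (π : Equiv.Perm (Fin δ)) (i : Fin δ) :
    permEquiv π (pencil i) = pencil (π.symm i) := by
  ext m
  · rfl
  · simp [lineMinus, ← Equiv.eq_symm_apply]

lemma IsConic.snd_nonneg (hδ : δ ≤ 8) {Q : Cls δ} (hQ : IsConic Q) (i : Fin δ) : 0 ≤ Q.2 i :=
  ip_exceptional Q i ▸ hQ.ip_nonneg_of_isMinusOne hδ (isMinusOne_exceptional i)

lemma IsConic.snd_le_fst (hδ : δ ≤ 9) {Q : Cls δ} (hQ : IsConic Q) (i : Fin δ) : Q.2 i ≤ Q.1 := by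
  have := hQ.ip_nonneg hδ (isConic_pencil i)
  rw [ip_lineMinus, Finset.sum_singleton] at this
  linarith

lemma IsConic.fst_pos (hδ : δ ≤ 8) {Q : Cls δ} (hQ : IsConic Q) : 0 < Q.1 := by
  by_contra! ha
  have hb : ∀ i, Q.2 i = 0 := fun i =>
    le_antisymm ((hQ.snd_le_fst (by omega) i).trans ha) (hQ.snd_nonneg hδ i)
  have := hQ.2
  simp [ip_Kcls, hb] at this
  omega

lemma IsConic.sum_snd {Q : Cls δ} (hQ : IsConic Q) : ∑ i, Q.2 i = 3 * Q.1 - 2 := by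
  have := hQ.2
  rw [ip_Kcls] at this
  linarith

lemma IsConic.sum_snd_mul_self {Q : Cls δ} (hQ : IsConic Q) :
    ∑ i, Q.2 i * Q.2 i = Q.1 * Q.1 := by
  have := hQ.1
  simp only [ip] at this
  linarith

theorem exists_isWeyl_of_descent (hδ : δ ≤ 8) (X : Set (Cls δ)) (P : Cls δ → Prop)
    (hstep : ∀ Q, IsConic Q → ¬ P Q → ∃ S : Finset (Fin δ), S.card = 3 ∧
      (∀ x ∈ X, ip (lineMinus S) x = 0) ∧ Q.1 < ∑ i ∈ S, Q.2 i)
    (Q : Cls δ) (hQ : IsConic Q) :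
    ∃ g : Cls δ ≃ₗ[ℤ] Cls δ, IsWeyl g ∧ (∀ x ∈ X, g x = x) ∧ P (g Q) := by
  by_cases hP : P Q
  · exact ⟨LinearEquiv.refl ℤ _, ⟨fun _ _ => rfl, rfl⟩, fun _ _ => rfl, hP⟩
  obtain ⟨S, hS, hX, hlt⟩ := hstep Q hQ hP
  have hr : ip (lineMinus S) (lineMinus S) = -2 := by rw [ip_lineMinus_self, hS]; norm_num
  have hw := isWeyl_rootReflection hr (by rw [ip_Kcls_lineMinus, hS]; norm_num)
  have hdeg : (rootReflection _ hr Q).1 = 2 * Q.1 - ∑ i ∈ S, Q.2 i := by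
    rw [rootReflection_apply, ip_comm, ip_lineMinus]
    simp [lineMinus]
    ring
  obtain ⟨g, hg, hgX, hgP⟩ := exists_isWeyl_of_descent hδ X P hstep _ (hQ.map hw)
  refine ⟨(rootReflection _ hr).trans g, hw.trans hg, fun x hx => ?_, hgP⟩
  rw [LinearEquiv.trans_apply, rootReflection_apply_of_ip_eq_zero hr (hX x hx), hgX x hx]
-- by `hdeg` and `hlt` the degree drops, and it stays positive
termination_by Q.1.toNat
decreasing_by have := (hQ.map hw).fst_pos hδ; omega

/-- Noether's inequality: the three largest multiplicities of a conic of degree `a ≥ 2`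
exceed `a`. -/
lemma lt_sum_top_three {a : ℤ} {y : Fin 8 → ℤ} (hy : Monotone y) (h0 : 0 ≤ y 0) (ha : 2 ≤ a)
    (h7 : y 7 ≤ a) (hsum : ∑ i, y i = 3 * a - 2) (hsq : ∑ i, y i * y i = a * a) :
    a < y 5 + y 6 + y 7 := by
  have hsmall : ∀ i : Fin 8, i ≤ 5 → y i * y i ≤ y 5 * y i := fun i hi =>
    mul_le_mul_of_nonneg_right (hy hi) (h0.trans (hy (Fin.zero_le i)))
  have h56 := hy (show (5 : Fin 8) ≤ 6 by decide)
  have h67 := hy (show (6 : Fin 8) ≤ 7 by decide)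
  rw [Fin.sum_univ_eight] at hsum hsq
  have := hsmall 0 (by decide)
  have := hsmall 1 (by decide)
  have := hsmall 2 (by decide)
  have := hsmall 3 (by decide)
  have := hsmall 4 (by decide)
  by_contra! hs
  rcases h7.lt_or_eq with h7 | h7
  · -- with `y i ^ 2 ≤ y 5 * y i` for `i ≤ 4`, the sum of squares falls short of `a ^ 2`
    nlinarith [mul_nonneg (sub_nonneg.2 h67) (sub_nonneg.2 h56),
      mul_nonneg (by linarith : 0 ≤ y 6 + y 7 - 2 * y 5) (by linarith : 0 ≤ 3 * a - 2 - 3 * y 7),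
      mul_nonneg (by linarith : 0 ≤ a - (y 5 + y 6 + y 7)) (by linarith : 0 ≤ 3 * a - 2)]
  · linarith [hy (show (0 : Fin 8) ≤ 5 by decide), hy (show (1 : Fin 8) ≤ 5 by decide),
      hy (show (2 : Fin 8) ≤ 5 by decide), hy (show (3 : Fin 8) ≤ 5 by decide),
      hy (show (4 : Fin 8) ≤ 5 by decide)]

lemma IsConic.exists_eq_pencil (hδ : δ ≤ 8) {Q : Cls δ} (hQ : IsConic Q) (h1 : Q.1 = 1) :
    ∃ i, Q = pencil i := by
  obtain ⟨i, -, hi⟩ := Finset.exists_ne_zero_of_sum_ne_zero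
    (show ∑ i, Q.2 i ≠ 0 by rw [hQ.sum_snd]; omega)
  have hbi : Q.2 i = 1 := by
    have := hQ.snd_nonneg hδ i
    have := hQ.snd_le_fst (by omega) i
    omega
  exact ⟨i, hQ.eq_of_ip_eq_zero hδ (isConic_pencil i) (by simp [ip_lineMinus, h1, hbi])⟩

lemma IsConic.exists_card_eq_three_lt_sum {Q : Cls 8} (hQ : IsConic Q) (ha : 2 ≤ Q.1) :
    ∃ S : Finset (Fin 8), S.card = 3 ∧ Q.1 < ∑ i ∈ S, Q.2 i := by
  refine ⟨Finset.map (Tuple.sort Q.2).toEmbedding {5, 6, 7}, by simp, ?_⟩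
  rw [Finset.sum_map]
  simpa [add_assoc] using lt_sum_top_three (Tuple.monotone_sort Q.2) (hQ.snd_nonneg le_rfl _) ha
    (hQ.snd_le_fst (by norm_num) _) ((Equiv.sum_comp _ Q.2).trans hQ.sum_snd)
    ((Equiv.sum_comp _ fun i => Q.2 i * Q.2 i).trans hQ.sum_snd_mul_self)

theorem exists_isWeyl_apply_eq_pencil_zero {Q : Cls 8} (hQ : IsConic Q) :
    ∃ g : Cls 8 ≃ₗ[ℤ] Cls 8, IsWeyl g ∧ g Q = pencil 0 := by
  obtain ⟨g, hg, -, hg1⟩ := exists_isWeyl_of_descent le_rfl ∅ (fun Q => Q.1 = 1)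
    (fun Q hQ h1 => by
      obtain ⟨S, hS, hlt⟩ := hQ.exists_card_eq_three_lt_sum (by have := hQ.fst_pos le_rfl; omega)
      exact ⟨S, hS, by simp, hlt⟩) Q hQ
  obtain ⟨i, hi⟩ := (hQ.map hg).exists_eq_pencil le_rfl hg1
  refine ⟨g.trans (permEquiv (Equiv.swap 0 i)), hg.trans (isWeyl_permEquiv _), ?_⟩
  rw [LinearEquiv.trans_apply, hi, permEquiv_pencil, Equiv.symm_swap, Equiv.swap_apply_right]

/-- The sorted multiplicities `y = (b₁, …, b₇)` of a conic `(a; a − n, b₁, …, b₇)`, so that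
`n = Q·(ℓ − e₀)`, on which no reflection in a root `ℓ − e₀ − e_i − e_j` lowers the degree. -/
structure IsReducedProfile (n a : ℤ) (y : Fin 7 → ℤ) : Prop where
  mono : Monotone y
  nonneg : 0 ≤ y 0
  top_two_le : y 5 + y 6 ≤ n
  sum_eq : ∑ i, y i = 2 * a - 2 + n
  sum_mul_self_eq : ∑ i, y i * y i = 2 * a * n - n * n

/-- For `n ≤ 3` the entries `y 0, …, y 5` are `0` or `1`, so only `y 6` enters the quadratic
constraint nonlinearly. -/
lemma IsReducedProfile.linearize {n a : ℤ} {y : Fin 7 → ℤ} (hn : n ≤ 3)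
    (h : IsReducedProfile n a y) :
    0 ≤ y 0 ∧ y 0 ≤ y 1 ∧ y 1 ≤ y 2 ∧ y 2 ≤ y 3 ∧ y 3 ≤ y 4 ∧ y 4 ≤ y 5 ∧ y 5 ≤ y 6 ∧ y 5 ≤ 1 ∧
      y 5 + y 6 ≤ n ∧ y 0 + y 1 + y 2 + y 3 + y 4 + y 5 + y 6 = 2 * a - 2 + n ∧
      y 0 + y 1 + y 2 + y 3 + y 4 + y 5 + y 6 * y 6 = 2 * a * n - n * n := by
  have hle : ∀ i : Fin 7, 0 ≤ y i := fun i => h.nonneg.trans (h.mono (Fin.zero_le i))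
  have h5 : y 5 ≤ 1 := by
    have := h.mono (show (5 : Fin 7) ≤ 6 by decide); have := h.top_two_le; omega
  have hsq : ∀ i : Fin 7, i ≤ 5 → y i * y i = y i := fun i hi => by
    have := h.mono hi; have := hle i
    rcases (show y i = 0 ∨ y i = 1 by omega) with h | h <;> simp [h]
  have hsum := h.sum_eq
  have hsum2 := h.sum_mul_self_eq
  simp only [Fin.sum_univ_seven] at hsum hsum2
  rw [hsq 0 (by decide), hsq 1 (by decide), hsq 2 (by decide), hsq 3 (by decide),
    hsq 4 (by decide), hsq 5 (by decide)] at hsum2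
  exact ⟨h.nonneg, h.mono (by decide), h.mono (by decide), h.mono (by decide), h.mono (by decide),
    h.mono (by decide), h.mono (by decide), h5, h.top_two_le, hsum, hsum2⟩

lemma IsReducedProfile.fst_eq_and_top_eq {n a : ℤ} {y : Fin 7 → ℤ} (hn : n ≤ 3)
    (h : IsReducedProfile n a y) : a = max n 1 ∧ y 6 = (n + 1) / 2 := by
  obtain ⟨h0, h01, h12, h23, h34, h45, h56, h5, htop, hsum, hsq⟩ := h.linearize hn
  have hn0 : 0 ≤ n := by omega
  have h6 : y 6 = 0 ∨ y 6 = 1 ∨ y 6 = 2 ∨ y 6 = 3 := by omega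
  interval_cases n <;> rcases h6 with h6 | h6 | h6 | h6 <;> rw [h6] at hsq ⊢ <;> norm_num <;> omega

lemma IsReducedProfile.unique {n a a' : ℤ} {y y' : Fin 7 → ℤ} (hn : n ≤ 3)
    (h : IsReducedProfile n a y) (h' : IsReducedProfile n a' y') : a = a' ∧ y = y' := by
  obtain ⟨ha, h6⟩ := h.fst_eq_and_top_eq hn
  obtain ⟨ha', h6'⟩ := h'.fst_eq_and_top_eq hn
  obtain ⟨h0, h01, h12, h23, h34, h45, h56, h5, -, hsum, -⟩ := h.linearize hn
  obtain ⟨h0', h01', h12', h23', h34', h45', h56', h5', -, hsum', -⟩ := h'.linearize hn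
  refine ⟨ha.trans ha'.symm, funext fun i => ?_⟩
  fin_cases i <;> dsimp <;> omega

/-- The reflection in `ℓ − e₀ − e_i − e_j` fixes `ℓ − e₀` and changes the degree of `Q` by
`Q·(ℓ − e₀) − b_i − b_j`; `Q` is reduced when no such reflection lowers it. -/
def IsPencilReduced (Q : Cls 8) : Prop :=
  ∀ i j : Fin 7, i ≠ j → Q.2 i.succ + Q.2 j.succ ≤ ip (pencil 0) Q

theorem exists_isWeyl_fix_pencil_isPencilReduced {Q : Cls 8} (hQ : IsConic Q) :
    ∃ g : Cls 8 ≃ₗ[ℤ] Cls 8, IsWeyl g ∧ g (pencil 0) = pencil 0 ∧ IsPencilReduced (g Q) := by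
  obtain ⟨g, hg, hfix, hred⟩ := exists_isWeyl_of_descent le_rfl {pencil 0} IsPencilReduced
    (fun Q _ hQ => by
      simp only [IsPencilReduced, not_forall, not_le, ip_pencil] at hQ
      obtain ⟨i, j, hij, hlt⟩ := hQ
      refine ⟨{0, i.succ, j.succ}, ?_, ?_, ?_⟩
      · rw [Finset.card_insert_of_notMem (by simp [(Fin.succ_ne_zero _).symm]),
          Finset.card_pair (Fin.succ_injective _ |>.ne hij)]
      · simp only [Set.mem_singleton_iff, forall_eq]
        rw [ip_comm, ip_pencil]
        simp [lineMinus]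
      · rw [Finset.sum_insert (by simp [(Fin.succ_ne_zero _).symm]),
          Finset.sum_pair (Fin.succ_injective _ |>.ne hij)]
        linarith) Q hQ
  exact ⟨g, hg, hfix _ rfl, hred⟩

lemma IsConic.isReducedProfile {Q : Cls 8} (hQ : IsConic Q) (hred : IsPencilReduced Q) :
    IsReducedProfile (ip (pencil 0) Q) Q.1
      ((fun i : Fin 7 => Q.2 i.succ) ∘ Tuple.sort fun i : Fin 7 => Q.2 i.succ) where
  mono := Tuple.monotone_sort _
  nonneg := hQ.snd_nonneg le_rfl _
  top_two_le := hred _ _ ((Tuple.sort _).injective.ne (by decide))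
  sum_eq := by
    have := hQ.sum_snd
    rw [Fin.sum_univ_succ] at this
    refine (Equiv.sum_comp _ fun i : Fin 7 => Q.2 i.succ).trans ?_
    rw [ip_pencil]
    linarith
  sum_mul_self_eq := by
    have := hQ.sum_snd_mul_self
    rw [Fin.sum_univ_succ] at this
    refine (Equiv.sum_comp _ fun i : Fin 7 => Q.2 i.succ * Q.2 i.succ).trans ?_
    rw [ip_pencil]
    linarith

theorem exists_isWeyl_of_isPencilReduced {Q Q' : Cls 8} (hQ : IsConic Q) (hQ' : IsConic Q')
    (hred : IsPencilReduced Q) (hred' : IsPencilReduced Q')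
    (h : ip (pencil 0) Q = ip (pencil 0) Q') (h3 : ip (pencil 0) Q ≤ 3) :
    ∃ g : Cls 8 ≃ₗ[ℤ] Cls 8, IsWeyl g ∧ g (pencil 0) = pencil 0 ∧ g Q = Q' := by
  obtain ⟨ha, hy⟩ := (hQ.isReducedProfile hred).unique h3 (h ▸ hQ'.isReducedProfile hred')
  set σ := Tuple.sort fun i : Fin 7 => Q.2 i.succ
  set σ' := Tuple.sort fun i : Fin 7 => Q'.2 i.succ
  set π := Equiv.Perm.decomposeFin.symm (0, σ'.symm.trans σ)
  have hπ : π 0 = 0 := Equiv.Perm.decomposeFin_symm_apply_zero _ _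
  refine ⟨permEquiv π, isWeyl_permEquiv π, by
    rw [permEquiv_pencil, π.symm_apply_eq.mpr hπ.symm], ?_⟩
  refine Prod.ext ha (funext fun m => Fin.cases ?_ (fun i => ?_) m)
  · rw [ip_pencil, ip_pencil] at h
    simp only [permEquiv_apply, Function.comp_apply, hπ]
    linarith
  · simpa [π] using congrFun hy (σ'.symm i)

theorem exists_isWeyl_normal_form {Q₁ Q₂ : Cls 8} (hQ₁ : IsConic Q₁) (hQ₂ : IsConic Q₂) :
    ∃ g : Cls 8 ≃ₗ[ℤ] Cls 8, IsWeyl g ∧ g Q₁ = pencil 0 ∧ IsPencilReduced (g Q₂) := by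
  obtain ⟨g₁, hg₁, hQ₁g₁⟩ := exists_isWeyl_apply_eq_pencil_zero hQ₁
  obtain ⟨g₂, hg₂, hfix, hred⟩ := exists_isWeyl_fix_pencil_isPencilReduced (hQ₂.map hg₁)
  exact ⟨g₁.trans g₂, hg₁.trans hg₂, by simp [hQ₁g₁, hfix], hred⟩

theorem exists_isWeyl_of_ip_le_three {Q₁ Q₂ Q₁' Q₂' : Cls 8} (hQ₁ : IsConic Q₁)
    (hQ₂ : IsConic Q₂) (hQ₁' : IsConic Q₁') (hQ₂' : IsConic Q₂') (h : ip Q₁ Q₂ = ip Q₁' Q₂')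
    (h3 : ip Q₁ Q₂ ≤ 3) :
    ∃ g : Cls 8 ≃ₗ[ℤ] Cls 8, IsWeyl g ∧ g Q₁ = Q₁' ∧ g Q₂ = Q₂' := by
  obtain ⟨g, hg, hgQ₁, hred⟩ := exists_isWeyl_normal_form hQ₁ hQ₂
  obtain ⟨g', hg', hgQ₁', hred'⟩ := exists_isWeyl_normal_form hQ₁' hQ₂'
  have hip : ip (pencil 0) (g Q₂) = ip Q₁ Q₂ := by rw [← hgQ₁, hg.1]
  have hip' : ip (pencil 0) (g' Q₂') = ip Q₁' Q₂' := by rw [← hgQ₁', hg'.1]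
  obtain ⟨p, hp, hfix, hpQ₂⟩ := exists_isWeyl_of_isPencilReduced (hQ₂.map hg) (hQ₂'.map hg')
    hred hred' (by rw [hip, hip', h]) (hip ▸ h3)
  refine ⟨g.trans (p.trans g'.symm), hg.trans (hp.trans hg'.symm), ?_, ?_⟩
  · simp [hgQ₁, hfix, LinearEquiv.symm_apply_eq, hgQ₁']
  · simp [hpQ₂]

def oppositeConic (Q : Cls 8) : Cls 8 := (-4 : ℤ) • Kcls 8 - Q

lemma isConic_oppositeConic {Q : Cls 8} (hQ : IsConic Q) : IsConic (oppositeConic Q) := by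
  constructor <;>
    simp only [oppositeConic, ip_sub_left, ip_sub_right, ip_smul_left, ip_smul_right,
      ip_Kcls_Kcls, hQ.ip_Kcls_right, hQ.2, hQ.1] <;> norm_num

lemma IsConic.ip_oppositeConic {P : Cls 8} (hP : IsConic P) (Q : Cls 8) :
    ip P (oppositeConic Q) = 8 - ip P Q := by
  simp only [oppositeConic, ip_sub_right, ip_smul_right, hP.ip_Kcls_right]
  ring

lemma oppositeConic_oppositeConic (Q : Cls 8) : oppositeConic (oppositeConic Q) = Q :=
  sub_sub_cancel _ _

lemma IsWeyl.map_oppositeConic {g : Cls 8 ≃ₗ[ℤ] Cls 8} (hg : IsWeyl g) (Q : Cls 8) :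
    g (oppositeConic Q) = oppositeConic (g Q) := by
  rw [oppositeConic, map_sub, map_smul, hg.2, oppositeConic]

/-- For δ = 8, two ordered pairs of conic classes with the same intersection
product different from 4 lie in the same Weyl-group orbit. -/
theorem stmt6 (Q₁ Q₂ Q₁' Q₂' : Cls 8)
    (hQ₁ : IsConic Q₁) (hQ₂ : IsConic Q₂) (hQ₁' : IsConic Q₁') (hQ₂' : IsConic Q₂')
    (h : ip Q₁ Q₂ = ip Q₁' Q₂') (h4 : ip Q₁ Q₂ ≠ 4) :
    ∃ g : Cls 8 ≃ₗ[ℤ] Cls 8, IsWeyl g ∧ g Q₁ = Q₁' ∧ g Q₂ = Q₂' := by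
  rcases le_or_gt (ip Q₁ Q₂) 3 with h3 | h3
  · exact exists_isWeyl_of_ip_le_three hQ₁ hQ₂ hQ₁' hQ₂' h h3
  have h8 := hQ₁.ip_le_eight hQ₂
  obtain ⟨g, hg, hgQ₁, hgQ₂⟩ := exists_isWeyl_of_ip_le_three hQ₁ (isConic_oppositeConic hQ₂)
    hQ₁' (isConic_oppositeConic hQ₂')
    (by rw [hQ₁.ip_oppositeConic, hQ₁'.ip_oppositeConic, h]) (by rw [hQ₁.ip_oppositeConic]; omega)
  refine ⟨g, hg, hgQ₁, ?_⟩
  rw [← oppositeConic_oppositeConic Q₂, hg.map_oppositeConic, hgQ₂, oppositeConic_oppositeConic]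
end

section
/- Let L be a (−1)-class in the del Pezzo lattice of rank 9 (δ = 8). The stabilizer of L in the Weyl group W₈ acts on the set of all (−1)-classes with exactly five orbits (the orbits being distinguished by the value of the intersection number with L, which takes exactly the values −1, 0, 1, 2, 3). -/
/-! Reflections in roots `t` (`t·t = −2`, `K·t = 0`) lie in `W₈`. Take the simple roots of `E₈`
(the `eᵢ − eᵢ₊₁` and `ℓ − e₁ − e₂ − e₃`) and a class `ρ` pairing to `1` with each of them: if
`M·t < 0` for a simple root `t`, reflecting `M` in `t` lowers `M·ρ`. As `M·ρ ≥ 0` on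
`(−1)`-classes, every `(−1)`-class descends by simple reflections to a dominant one
(`M·t ≥ 0` for every simple `t`). Cauchy–Schwarz bounds degree and multiplicities, which leaves
seven explicit families of `(−1)`-classes, and a finite check over them shows that `e₈` is the
only dominant class, while for the simple roots of the `E₇` orthogonal to `e₈` there is exactly
one dominant class with each value of `M·e₈ ∈ {−1, 0, 1, 2, 3}`. So `W₈` is transitive on
`(−1)`-classes, and once `L` is moved to `e₈`, the `E₇` reflections, which fix `e₈`, connect any
two classes with the same intersection number with `L`. -/

lemma Nat.card_quot_eq_card_range {α β : Type*} {r : α → α → Prop} (f : α → β)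
    (h : ∀ x y, r x y ↔ f x = f y) : Nat.card (Quot r) = Nat.card (Set.range f) := by
  obtain rfl : r = fun x y => f x = f y := funext₂ fun x y => propext (h x y)
  exact Nat.card_congr (Setoid.quotientKerEquivRange f)

theorem MulAction.mem_orbit_of_descent {G X : Type*} [Group G] [MulAction G X] {P : X → Prop}
    {x₀ : X} (μ : X → ℤ) (hμ : ∀ x, P x → 0 ≤ μ x)
    (step : ∀ x, P x → x ≠ x₀ → ∃ g : G, P (g • x) ∧ μ (g • x) < μ x) :
    ∀ x, P x → x ∈ orbit G x₀ := by
  intro x hx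
  induction hn : (μ x).toNat using Nat.strong_induction_on generalizing x with
  | _ n ih =>
    by_cases hx₀ : x = x₀
    · exact hx₀ ▸ mem_orbit_self x
    obtain ⟨g, hgx, hlt⟩ := step x hx hx₀
    have hg : g • x ∈ orbit G x₀ := ih _ (by have := hμ _ hgx; omega) _ hgx rfl
    simpa using mem_orbit_of_mem_orbit g⁻¹ hg

namespace DelPezzo

open Finset MulAction

section Lattice

variable {δ : ℕ}

lemma ip_comm (x y : Cls δ) : ip x y = ip y x := by
  simp only [ip, mul_comm]

lemma ip_add_left (x y z : Cls δ) : ip (x + y) z = ip x z + ip y z := by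
  simp only [ip, Prod.fst_add, Prod.snd_add, Pi.add_apply, add_mul, sum_add_distrib]
  ring

lemma ip_smul_left (c : ℤ) (x y : Cls δ) : ip (c • x) y = c * ip x y := by
  simp only [ip, Prod.smul_fst, Prod.smul_snd, Pi.smul_apply, smul_eq_mul, mul_sub, mul_sum,
    mul_assoc]

lemma ip_add_right (x y z : Cls δ) : ip x (y + z) = ip x y + ip x z := by
  rw [ip_comm, ip_add_left, ip_comm y, ip_comm z]

lemma ip_smul_right (c : ℤ) (x y : Cls δ) : ip x (c • y) = c * ip x y := by
  rw [ip_comm, ip_smul_left, ip_comm]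

def ipForm : LinearMap.BilinForm ℤ (Cls δ) :=
  LinearMap.mk₂ ℤ ip ip_add_left ip_smul_left ip_add_right ip_smul_right

lemma isMinusOne_iff (a : ℤ) (b : Fin δ → ℤ) :
    IsMinusOne ((a, b) : Cls δ) ↔ ∑ i, b i ^ 2 = a ^ 2 + 1 ∧ ∑ i, b i = 3 * a - 1 := by
  simp only [IsMinusOne, ip, Kcls, neg_mul, one_mul, sum_neg_distrib, sq]
  constructor <;> rintro ⟨h₁, h₂⟩ <;> constructor <;> linarith

instance : DecidablePred (IsMinusOne (δ := δ)) :=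
  fun _ => inferInstanceAs (Decidable (_ ∧ _))

def IsRoot (t : Cls δ) : Prop := ip t t = -2 ∧ ip (Kcls δ) t = 0

instance : DecidablePred (IsRoot (δ := δ)) :=
  fun _ => inferInstanceAs (Decidable (_ ∧ _))

def weylGroup (δ : ℕ) : Subgroup (Cls δ ≃ₗ[ℤ] Cls δ) where
  carrier := {g | IsWeyl g}
  one_mem' := ⟨fun _ _ => rfl, rfl⟩
  mul_mem' {g h} hg hh := ⟨fun x y => by simp only [LinearEquiv.mul_apply, hg.1, hh.1],
    by rw [LinearEquiv.mul_apply, hh.2, hg.2]⟩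
  inv_mem' {g} hg := by
    refine ⟨fun x y => ?_, ?_⟩
    · rw [← hg.1, LinearEquiv.coe_inv, g.apply_symm_apply, g.apply_symm_apply]
    · rw [LinearEquiv.coe_inv, LinearEquiv.symm_apply_eq, hg.2]

lemma ip_smul (g : weylGroup δ) (x y : Cls δ) : ip (g • x) (g • y) = ip x y :=
  g.2.1 x y

lemma smul_kcls (g : weylGroup δ) : g • Kcls δ = Kcls δ :=
  g.2.2

lemma _root_.IsMinusOne.smul {M : Cls δ} (hM : IsMinusOne M) (g : weylGroup δ) :
    IsMinusOne (g • M) := by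
  rw [IsMinusOne, ip_smul, ← smul_kcls g, ip_smul]
  exact hM

def reflection {t : Cls δ} (ht : ip t t = -2) : Cls δ ≃ₗ[ℤ] Cls δ :=
  Module.reflection (x := t) (f := -ipForm.flip t) (by simp [ipForm, ht])

lemma reflection_apply {t : Cls δ} (ht : ip t t = -2) (x : Cls δ) :
    reflection ht x = x + ip x t • t := by
  simp [reflection, Module.reflection_apply, ipForm, sub_eq_add_neg]

lemma reflection_mem_weylGroup {t : Cls δ} (ht : IsRoot t) : reflection ht.1 ∈ weylGroup δ := by
  refine ⟨fun x y => ?_, ?_⟩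
  · simp only [reflection_apply, ip_add_left, ip_add_right, ip_smul_left, ip_smul_right, ht.1,
      ip_comm t y]
    ring
  · rw [reflection_apply, ht.2, zero_smul, add_zero]

def IsDominant (gens : List (Cls δ)) (M : Cls δ) : Prop := ∀ t ∈ gens, 0 ≤ ip M t

instance (gens : List (Cls δ)) : DecidablePred (IsDominant gens) :=
  fun M => inferInstanceAs (Decidable (∀ t ∈ gens, 0 ≤ ip M t))

lemma exists_reflection_lt_of_not_isDominant {gens : List (Cls δ)} {ρ : Cls δ}
    (hgens : ∀ t ∈ gens, IsRoot t ∧ ip t ρ = 1) {M : Cls δ} (hM : ¬ IsDominant gens M) :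
    ∃ t ∈ gens, ∃ ht : IsRoot t, ip (reflection ht.1 M) ρ < ip M ρ := by
  simp only [IsDominant, not_forall, not_le] at hM
  obtain ⟨t, ht, hMt⟩ := hM
  refine ⟨t, ht, (hgens t ht).1, ?_⟩
  rw [reflection_apply, ip_add_left, ip_smul_left, (hgens t ht).2]
  linarith

end Lattice

section Classification

lemma exists_eq_ite_mem {ι : Type*} [Fintype ι] [DecidableEq ι] {b : ι → ℤ} {c : ℤ}
    (hb : ∀ i, b i = c ∨ b i = c + 1) :
    ∃ S : Finset ι, b = (fun i => if i ∈ S then c + 1 else c) ∧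
      ∑ i, b i = Fintype.card ι * c + S.card := by
  set S := univ.filter fun i => b i = c + 1
  have hbS : b = fun i => if i ∈ S then c + 1 else c := by
    funext i
    rcases hb i with h | h <;> simp [S, h]
  refine ⟨S, hbS, ?_⟩
  calc ∑ i, b i = ∑ i, (c + if i ∈ S then 1 else 0) := by
        refine sum_congr rfl fun i _ => ?_
        by_cases h : i ∈ S <;> simp [hbS, h]
    _ = Fintype.card ι * c + S.card := by
        rw [sum_add_distrib, sum_boole, sum_const, card_univ, nsmul_eq_mul, filter_mem_eq_inter,
          univ_inter]

lemma exists_eq_ite_eq_ite {ι : Type*} [Fintype ι] [DecidableEq ι] {b : ι → ℤ}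
    (hb : ∀ i, 0 ≤ b i ∧ b i ≤ 2) (hsum : ∑ i, b i = Fintype.card ι)
    (hsq : ∑ i, b i ^ 2 = Fintype.card ι + 2) :
    ∃ p z, p ≠ z ∧ b = fun k => if k = p then 2 else if k = z then 0 else 1 := by
  have hb' : ∀ i, b i = 0 ∨ b i = 1 ∨ b i = 2 := fun i => by have := hb i; omega
  have hP : (univ.filter fun i => b i = 2).card = 1 := by
    have h : ∑ i, (b i ^ 2 - b i) = ∑ i, if b i = 2 then 2 else 0 :=
      sum_congr rfl fun i _ => by rcases hb' i with h | h | h <;> simp [h]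
    rw [sum_sub_distrib, hsum, hsq, sum_ite, sum_const_zero, sum_const, nsmul_eq_mul] at h
    omega
  have hZ : (univ.filter fun i => b i = 0).card = 1 := by
    have h : ∑ i, (b i ^ 2 - 3 * b i + 2) = ∑ i, if b i = 0 then 2 else 0 :=
      sum_congr rfl fun i _ => by rcases hb' i with h | h | h <;> simp [h]
    rw [sum_add_distrib, sum_sub_distrib, ← mul_sum, hsum, hsq, sum_ite, sum_const_zero,
      sum_const, sum_const, card_univ, nsmul_eq_mul, nsmul_eq_mul] at h
    omega
  obtain ⟨p, hp⟩ := card_eq_one.mp hP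
  obtain ⟨z, hz⟩ := card_eq_one.mp hZ
  have hp' : ∀ i, b i = 2 ↔ i = p := fun i => by simpa using Finset.ext_iff.mp hp i
  have hz' : ∀ i, b i = 0 ↔ i = z := fun i => by simpa using Finset.ext_iff.mp hz i
  have hpz : p ≠ z := fun h => by simpa [h, (hz' z).2 rfl] using (hp' p).2 rfl
  refine ⟨p, z, hpz, funext fun k => ?_⟩
  by_cases hkp : k = p
  · simp [hkp, (hp' p).2 rfl]
  by_cases hkz : k = z
  · simp [hkz, hpz.symm, (hz' z).2 rfl]
  have := (hp' k).not.2 hkp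
  have := (hz' k).not.2 hkz
  have := hb' k
  simp only [hkp, hkz, if_false]
  omega

lemma _root_.IsMinusOne.coord_bound {a : ℤ} {b : Fin 8 → ℤ} (hM : IsMinusOne ((a, b) : Cls 8))
    (i : Fin 8) : 4 * b i ^ 2 - (3 * a - 1) * b i + a ^ 2 - 3 * a - 3 ≤ 0 := by
  obtain ⟨hsq, hsum⟩ := (isMinusOne_iff a b).1 hM
  have hcs := sq_sum_le_card_mul_sum_sq (s := univ.erase i) (f := b)
  rw [sum_erase_eq_sub (mem_univ i), sum_erase_eq_sub (mem_univ i), hsum, hsq,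
    card_erase_of_mem (mem_univ i)] at hcs
  norm_num at hcs
  nlinarith [hcs]

lemma _root_.IsMinusOne.degree_bound {a : ℤ} {b : Fin 8 → ℤ} (hM : IsMinusOne ((a, b) : Cls 8)) :
    -1 ≤ a ∧ a ≤ 7 := by
  obtain ⟨hsq, hsum⟩ := (isMinusOne_iff a b).1 hM
  have hcs := sq_sum_le_card_mul_sum_sq (s := (univ : Finset (Fin 8))) (f := b)
  rw [hsum, hsq] at hcs
  norm_num at hcs
  constructor <;> nlinarith [hcs]

/-- A `(−1)`-class of degree `a ≠ 3` has all its multiplicities in `{c, c + 1}`; the entry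
`(a, c, m)` records that exactly `m` of them equal `c + 1`. -/
def indicatorFamilies : List (ℤ × ℤ × ℕ) :=
  [(0, -1, 7), (1, 0, 2), (2, 0, 5), (4, 1, 3), (5, 1, 6), (6, 2, 1)]

theorem forall_isMinusOne {Q : Cls 8 → Prop}
    (hind : ∀ p ∈ indicatorFamilies, ∀ S : Finset (Fin 8), S.card = p.2.2 →
      Q (p.1, fun i => if i ∈ S then p.2.1 + 1 else p.2.1))
    (hcubic : ∀ p z : Fin 8, p ≠ z →
      Q (3, fun k => if k = p then 2 else if k = z then 0 else 1)) :
    ∀ M : Cls 8, IsMinusOne M → Q M := by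
  rintro ⟨a, b⟩ hM
  have hb := hM.coord_bound
  obtain ⟨hsq, hsum⟩ := (isMinusOne_iff a b).1 hM
  have indicator (c : ℤ) (m : ℕ) (hfam : (a, c, m) ∈ indicatorFamilies)
      (hm : 8 * c + m = 3 * a - 1) (hbc : ∀ i, c ≤ b i ∧ b i ≤ c + 1) : Q (a, b) := by
    obtain ⟨S, rfl, hS⟩ :=
      exists_eq_ite_mem fun i => (by have := hbc i; omega : b i = c ∨ b i = c + 1)
    rw [hsum] at hS
    norm_num at hS
    exact hind _ hfam S (by dsimp only; omega)
  obtain ⟨ha₀, ha₇⟩ := hM.degree_bound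
  interval_cases a
  · have h : (2 * b 0 + 1) ^ 2 = 0 := le_antisymm (by nlinarith [hb 0]) (sq_nonneg _)
    have := pow_eq_zero_iff two_ne_zero |>.1 h
    omega
  · exact indicator (-1) 7 (by decide) rfl fun i => ⟨by nlinarith [hb i], by nlinarith [hb i]⟩
  · exact indicator 0 2 (by decide) rfl fun i => ⟨by nlinarith [hb i], by nlinarith [hb i]⟩
  · exact indicator 0 5 (by decide) rfl fun i => ⟨by nlinarith [hb i], by nlinarith [hb i]⟩
  · obtain ⟨p, z, hpz, rfl⟩ := exists_eq_ite_eq_ite (b := b)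
      (fun i => ⟨by nlinarith [hb i], by nlinarith [hb i]⟩) (by simpa using hsum)
      (by simpa using hsq)
    exact hcubic p z hpz
  · exact indicator 1 3 (by decide) rfl fun i => ⟨by nlinarith [hb i], by nlinarith [hb i]⟩
  · exact indicator 1 6 (by decide) rfl fun i => ⟨by nlinarith [hb i], by nlinarith [hb i]⟩
  · exact indicator 2 1 (by decide) rfl fun i => ⟨by nlinarith [hb i], by nlinarith [hb i]⟩
  · have h : (2 * b 0 - 5) ^ 2 = 0 := le_antisymm (by nlinarith [hb 0]) (sq_nonneg _)
    have := pow_eq_zero_iff two_ne_zero |>.1 h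
    omega

end Classification

section E8

/-- `exc i` is `e_{i+1}`: `Fin 8` counts from `0`, so `exc 7` is `e₈`. -/
def exc (i : Fin 8) : Cls 8 := (0, fun j => if j = i then -1 else 0)

def line : Cls 8 := (1, 0)

def simpleRootsE7 : List (Cls 8) :=
  [line - exc 0 - exc 1 - exc 2, exc 0 - exc 1, exc 1 - exc 2, exc 2 - exc 3, exc 3 - exc 4,
    exc 4 - exc 5, exc 5 - exc 6]

def simpleRootsE8 : List (Cls 8) := simpleRootsE7 ++ [exc 6 - exc 7]

def rho : Cls 8 := (19, ![7, 6, 5, 4, 3, 2, 1, 0])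

def dominantE7Class : ℤ → Cls 8
  | -1 => exc 7
  | 0 => exc 6
  | 1 => line - exc 0 - exc 7
  | 2 => (3, ![1, 1, 1, 1, 1, 1, 0, 2])
  | 3 => (6, ![2, 2, 2, 2, 2, 2, 2, 3])
  | _ => 0

lemma simpleRootsE8_spec : ∀ t ∈ simpleRootsE8, IsRoot t ∧ ip t rho = 1 := by decide

lemma ip_exc7_simpleRootsE7 : ∀ t ∈ simpleRootsE7, ip (exc 7) t = 0 := by decide

lemma dominantE7Class_spec : ∀ k ∈ ({-1, 0, 1, 2, 3} : Finset ℤ),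
    IsMinusOne (dominantE7Class k) ∧ ip (dominantE7Class k) (exc 7) = k := by decide

set_option maxRecDepth 100000 in
lemma ip_rho_nonneg : ∀ M : Cls 8, IsMinusOne M → 0 ≤ ip M rho :=
  forall_isMinusOne (by decide) (by decide)

set_option maxRecDepth 100000 in
lemma ip_exc7_mem : ∀ M : Cls 8, IsMinusOne M → ip M (exc 7) ∈ ({-1, 0, 1, 2, 3} : Finset ℤ) :=
  forall_isMinusOne (by decide) (by decide)

set_option maxRecDepth 100000 in
lemma eq_exc7_of_isDominant :
    ∀ M : Cls 8, IsMinusOne M → IsDominant simpleRootsE8 M → M = exc 7 :=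
  forall_isMinusOne (by decide) (by decide)

set_option maxRecDepth 100000 in
lemma eq_dominantE7Class_of_isDominant :
    ∀ M : Cls 8, IsMinusOne M → IsDominant simpleRootsE7 M → M = dominantE7Class (ip M (exc 7)) :=
  forall_isMinusOne (by decide) (by decide)

end E8

section Orbits

lemma mem_orbit_exc7 : ∀ M : Cls 8, IsMinusOne M → M ∈ orbit (weylGroup 8) (exc 7) :=
  mem_orbit_of_descent (fun M => ip M rho) ip_rho_nonneg fun M hM hne => by
    obtain ⟨t, -, ht, hlt⟩ := exists_reflection_lt_of_not_isDominant simpleRootsE8_spec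
      (mt (eq_exc7_of_isDominant M hM) hne)
    exact ⟨⟨_, reflection_mem_weylGroup ht⟩, hM.smul _, hlt⟩

lemma pair_mem_orbit_dominantE7Class {M : Cls 8} (hM : IsMinusOne M) :
    (exc 7, M) ∈ orbit (weylGroup 8) (exc 7, dominantE7Class (ip M (exc 7))) := by
  set k := ip M (exc 7)
  refine mem_orbit_of_descent (P := fun x => x.1 = exc 7 ∧ IsMinusOne x.2 ∧ ip x.2 (exc 7) = k)
    (fun x => ip x.2 rho) (fun x hx => ip_rho_nonneg _ hx.2.1) ?_ _ ⟨rfl, hM, rfl⟩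
  rintro ⟨_, N⟩ ⟨rfl, hN, hNk⟩ hne
  have hdom : ¬ IsDominant simpleRootsE7 N := fun hdom =>
    hne (by rw [eq_dominantE7Class_of_isDominant N hN hdom, hNk])
  obtain ⟨t, htE7, ht, hlt⟩ := exists_reflection_lt_of_not_isDominant
    (fun t ht => simpleRootsE8_spec t (List.mem_append_left _ ht)) hdom
  set g : weylGroup 8 := ⟨_, reflection_mem_weylGroup ht⟩
  have hg : g • exc 7 = exc 7 := by
    change reflection ht.1 (exc 7) = exc 7
    rw [reflection_apply, ip_exc7_simpleRootsE7 t htE7, zero_smul, add_zero]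
  refine ⟨g, ⟨hg, hN.smul g, ?_⟩, hlt⟩
  change ip (g • N) (exc 7) = k
  conv_lhs => rw [← hg]
  rw [ip_smul, ← hNk]

lemma pair_mem_orbit {L M : Cls 8} (hL : IsMinusOne L) (hM : IsMinusOne M) :
    (L, M) ∈ orbit (weylGroup 8) (exc 7, dominantE7Class (ip M L)) := by
  obtain ⟨w, rfl⟩ := mem_orbit_exc7 L hL
  have h := pair_mem_orbit_dominantE7Class (hM.smul w⁻¹)
  rw [← ip_smul w, smul_inv_smul] at h
  simpa [Prod.smul_mk] using mem_orbit_of_mem_orbit w h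

lemma exists_isWeyl_fix_iff {L M M' : Cls 8} (hL : IsMinusOne L) (hM : IsMinusOne M)
    (hM' : IsMinusOne M') :
    (∃ g : Cls 8 ≃ₗ[ℤ] Cls 8, IsWeyl g ∧ g L = L ∧ g M = M') ↔ ip M L = ip M' L := by
  constructor
  · rintro ⟨g, hg, hgL, rfl⟩
    rw [← hg.1, hgL]
  · intro h
    have hLM' := pair_mem_orbit hL hM'
    rw [← h, ← orbit_eq_iff.mpr (pair_mem_orbit hL hM)] at hLM'
    obtain ⟨g, hg⟩ := hLM'
    exact ⟨g, g.2, congrArg Prod.fst hg, congrArg Prod.snd hg⟩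

lemma ip_mem_of_isMinusOne {L M : Cls 8} (hL : IsMinusOne L) (hM : IsMinusOne M) :
    ip M L ∈ ({-1, 0, 1, 2, 3} : Set ℤ) := by
  obtain ⟨w, rfl⟩ := mem_orbit_exc7 L hL
  rw [← smul_inv_smul w M, ip_smul]
  simpa using ip_exc7_mem _ (hM.smul w⁻¹)

lemma exists_isMinusOne_ip_eq {L : Cls 8} (hL : IsMinusOne L) {k : ℤ}
    (hk : k ∈ ({-1, 0, 1, 2, 3} : Set ℤ)) : ∃ M : Cls 8, IsMinusOne M ∧ ip M L = k := by
  obtain ⟨w, rfl⟩ := mem_orbit_exc7 L hL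
  obtain ⟨hbase, hk'⟩ := dominantE7Class_spec k (by simpa using hk)
  exact ⟨w • dominantE7Class k, hbase.smul w, by rw [ip_smul, hk']⟩

end Orbits

end DelPezzo

open DelPezzo

/-- The stabilizer of a (−1)-class L in W₈ acts on the set of (−1)-classes
with exactly five orbits, the orbits being distinguished by the intersection
number with L, which takes exactly the values −1, 0, 1, 2, 3. -/
theorem stmt11 (L : Cls 8) (hL : IsMinusOne L) :
    Nat.card (Quot (fun M M' : {M : Cls 8 // IsMinusOne M} =>
      ∃ g : Cls 8 ≃ₗ[ℤ] Cls 8, IsWeyl g ∧ g L = L ∧ g M.1 = M'.1)) = 5 ∧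
    (∀ M M' : {M : Cls 8 // IsMinusOne M},
      (∃ g : Cls 8 ≃ₗ[ℤ] Cls 8, IsWeyl g ∧ g L = L ∧ g M.1 = M'.1) ↔
        ip M.1 L = ip M'.1 L) ∧
    (∀ M : Cls 8, IsMinusOne M → ip M L ∈ ({-1, 0, 1, 2, 3} : Set ℤ)) ∧
    (∀ k ∈ ({-1, 0, 1, 2, 3} : Set ℤ), ∃ M : Cls 8, IsMinusOne M ∧ ip M L = k) := by
  have horbit : ∀ M M' : {M : Cls 8 // IsMinusOne M},
      (∃ g : Cls 8 ≃ₗ[ℤ] Cls 8, IsWeyl g ∧ g L = L ∧ g M.1 = M'.1) ↔ ip M.1 L = ip M'.1 L :=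
    fun M M' => exists_isWeyl_fix_iff hL M.2 M'.2
  have hrange :
      Set.range (fun M : {M : Cls 8 // IsMinusOne M} => ip M.1 L) = {-1, 0, 1, 2, 3} := by
    ext k
    refine ⟨?_, fun hk => ?_⟩
    · rintro ⟨M, rfl⟩
      exact ip_mem_of_isMinusOne hL M.2
    · obtain ⟨M, hM, rfl⟩ := exists_isMinusOne_ip_eq hL hk
      exact ⟨⟨M, hM⟩, rfl⟩
  refine ⟨?_, horbit, fun M hM => ip_mem_of_isMinusOne hL hM,
    fun k hk => exists_isMinusOne_ip_eq hL hk⟩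
  rw [Nat.card_quot_eq_card_range _ horbit, hrange]
  simp [Nat.card_eq_fintype_card]
end
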